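/- Let c₁ < c₂ be real numbers, let g be a real polynomial that is not identically zero, let k < p be natural numbers, let α : ℕ → ℝ satisfy α_{k+1} ≠ 0, and let f(ξ) = Σ_{m=k+1}^{p} α_m ξ^m. Then, as δ → 0⁺, the squared H¹ seminorm of φ(ξ₁,ξ₂) = g(ξ₁)f(ξ₂) on the rectangle [c₁,c₂] × [0,δ] is Θ of δ^{-2} times its squared L² norm on the same rectangle; i.e. the function δ ↦ ∫_{c₁}^{c₂}∫_0^δ ((g′)²f² + g²(f′)²) is IsTheta to δ ↦ δ^{-2}·∫_{c₁}^{c₂}∫_0^δ g²f². -/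

import Mathlib

/-!
Write `f(t) = t^{k+1} h(t)` and `f'(t) = t^k w(t)`, where `h(0) = α_{k+1}` and
`w(0) = (k+1) α_{k+1}` are nonzero. The substitution `t = δ s` turns `∫₀^δ t^n q(t) dt` into
`δ^{n+1} ∫₀¹ s^n q(δ s) ds`, and the last integral tends to `q(0)/(n+1) ≠ 0`; hence
`∫₀^δ f² ≍ δ^{2k+3}` and `∫₀^δ f'² ≍ δ^{2k+1}`. Both double integrals split into products, so
with `B = ∫ g² > 0` the seminorm is `(∫ g'²) ∫₀^δ f² + B ∫₀^δ f'² ≍ δ^{2k+1}`, the first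
term being of smaller order, and `δ⁻² B ∫₀^δ f² ≍ δ^{2k+1}` as well.
-/

open Topology Asymptotics Polynomial Filter Finset intervalIntegral

theorem isTheta_integral_pow_mul {q : ℝ → ℝ} (hq : Continuous q) (hq0 : q 0 ≠ 0) (n : ℕ) :
    (fun δ => ∫ t in (0:ℝ)..δ, t ^ n * q t) =Θ[𝓝 0] fun δ => δ ^ (n + 1) := by
  set J : ℝ → ℝ := fun δ => ∫ s in (0:ℝ)..1, s ^ n * q (δ * s)
  have hrescale : ∀ δ, ∫ t in (0:ℝ)..δ, t ^ n * q t = δ ^ (n + 1) * J δ := by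
    intro δ
    have := smul_integral_comp_mul_left (fun t => t ^ n * q t) δ (a := 0) (b := 1)
    simp only [mul_zero, mul_one, smul_eq_mul, mul_pow, mul_assoc, integral_const_mul] at this
    rw [← this, pow_succ]
    ring
  have hJ : Tendsto J (𝓝 0) (𝓝 (q 0 / (n + 1))) := by
    have : Continuous J := continuous_parametric_intervalIntegral_of_continuous' (by fun_prop) 0 1
    simpa [J, integral_pow, div_eq_inv_mul] using this.tendsto 0
  have hJ1 : J =Θ[𝓝 0] fun _ => (1:ℝ) :=
    (isTheta_of_div_tendsto_nhds_ne_zero (by simpa using hJ) (by positivity)).symm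
  simpa [hrescale] using (isTheta_refl (fun δ : ℝ => δ ^ (n + 1)) _).mul hJ1

theorem sum_Icc_mul_pow_sub_eq_pow_mul (α : ℕ → ℝ) {i a : ℕ} (b : ℕ) (hia : i ≤ a) (t : ℝ) :
    ∑ m ∈ Icc a b, α m * t ^ (m - i) = t ^ (a - i) * ∑ m ∈ Icc a b, α m * t ^ (m - a) := by
  rw [mul_sum]
  refine sum_congr rfl fun m hm => ?_
  rw [mul_left_comm, ← pow_add]
  congr 2
  have := (mem_Icc.mp hm).1
  omega

theorem sum_Icc_mul_zero_pow_sub (α : ℕ → ℝ) {a b : ℕ} (hab : a ≤ b) :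
    ∑ m ∈ Icc a b, α m * (0 : ℝ) ^ (m - a) = α a := by
  rw [sum_eq_single_of_mem a (mem_Icc.mpr ⟨le_rfl, hab⟩) fun m hm hma => by
    rw [zero_pow (by have := (mem_Icc.mp hm).1; omega), mul_zero]]
  simp

theorem isTheta_integral_sq_sum_Icc_mul_pow_sub (α : ℕ → ℝ) {i a b : ℕ} (hia : i ≤ a)
    (hab : a ≤ b) (hα : α a ≠ 0) :
    (fun δ => ∫ t in (0:ℝ)..δ, (∑ m ∈ Icc a b, α m * t ^ (m - i)) ^ 2) =Θ[𝓝 0]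
      fun δ => δ ^ (2 * (a - i) + 1) := by
  have hsq : ∀ t : ℝ, (∑ m ∈ Icc a b, α m * t ^ (m - i)) ^ 2 =
      t ^ (2 * (a - i)) * (∑ m ∈ Icc a b, α m * t ^ (m - a)) ^ 2 := by
    intro t
    rw [sum_Icc_mul_pow_sub_eq_pow_mul α b hia, mul_pow, ← pow_mul, mul_comm (a - i)]
  simp_rw [hsq]
  refine isTheta_integral_pow_mul (by fun_prop) ?_ _
  rw [sum_Icc_mul_zero_pow_sub α hab]
  exact pow_ne_zero 2 hα

theorem deriv_sum_mul_pow (α : ℕ → ℝ) (s : Finset ℕ) :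
    deriv (fun t : ℝ => ∑ m ∈ s, α m * t ^ m) = fun t => ∑ m ∈ s, α m * m * t ^ (m - 1) := by
  funext t
  simpa only [mul_assoc] using
    (HasDerivAt.fun_sum fun m _ => (hasDerivAt_pow m t).const_mul (α m)).deriv

theorem integral_integral_mul_add_mul {u₁ u₂ v₁ v₂ : ℝ → ℝ} (hu₁ : Continuous u₁)
    (hu₂ : Continuous u₂) (hv₁ : Continuous v₁) (hv₂ : Continuous v₂) (a b c d : ℝ) :
    ∫ x in a..b, ∫ y in c..d, u₁ x * v₁ y + u₂ x * v₂ y =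
      (∫ x in a..b, u₁ x) * (∫ y in c..d, v₁ y) + (∫ x in a..b, u₂ x) * ∫ y in c..d, v₂ y := by
  simp_rw [integral_add ((hv₁.const_mul _).intervalIntegrable _ _)
    ((hv₂.const_mul _).intervalIntegrable _ _), integral_const_mul]
  rw [integral_add, integral_mul_const, integral_mul_const] <;>
    exact Continuous.intervalIntegrable (by fun_prop) _ _

theorem integral_integral_mul (u v : ℝ → ℝ) (a b c d : ℝ) :
    ∫ x in a..b, ∫ y in c..d, u x * v y = (∫ x in a..b, u x) * ∫ y in c..d, v y := by
  simp_rw [integral_const_mul, integral_mul_const]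

theorem Polynomial.integral_eval_sq_pos {g : ℝ[X]} (hg : g ≠ 0) {a b : ℝ} (hab : a < b) :
    0 < ∫ x in a..b, g.eval x ^ 2 := by
  rw [integral_pos_iff_support_of_nonneg_ae (Eventually.of_forall fun x => sq_nonneg _)
    ((g.continuous.pow 2).intervalIntegrable _ _)]
  refine ⟨hab, ?_⟩
  calc (0 : ENNReal) < MeasureTheory.volume (Set.Ioc a b) := by simp [hab]
    _ = MeasureTheory.volume (Set.Ioc a b \ {x | g.IsRoot x}) :=
      (MeasureTheory.measure_sdiff_null ((g.finite_setOfPred_isRoot hg).measure_zero _)).symm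
    _ ≤ _ := MeasureTheory.measure_mono fun x hx =>
      Set.mem_inter (Function.mem_support.mpr (pow_ne_zero _ hx.2)) hx.1

theorem zpow_neg_two_mul_pow_add_two {δ : ℝ} (hδ : δ ≠ 0) (n : ℕ) :
    δ ^ (-2 : ℤ) * δ ^ (n + 2) = δ ^ n := by
  rw [← zpow_natCast, ← zpow_add₀ hδ, ← zpow_natCast]
  congr 1
  push_cast
  ring

/-- Norm equivalence (Lemma 5.1, configuration (a)): for `φ(ξ₁,ξ₂) = g(ξ₁) f(ξ₂)`
with `g` a nonzero polynomial and `f(ξ) = ∑_{m=k+1}^{p} α_m ξ^m`, `α_{k+1} ≠ 0`,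
the squared `H¹` seminorm of `φ` on `[c₁,c₂] × [0,δ]` is `Θ` of `δ^{-2}` times its
squared `L²` norm on the same rectangle, as `δ → 0⁺`. -/
theorem h1_l2_equivalence_config_a (c₁ c₂ : ℝ) (hc : c₁ < c₂)
    (g : Polynomial ℝ) (hg : g ≠ 0)
    (k p : ℕ) (hkp : k < p) (α : ℕ → ℝ) (hα : α (k + 1) ≠ 0) :
    (fun δ : ℝ => ∫ ξ₁ in c₁..c₂, ∫ ξ₂ in (0:ℝ)..δ,
        ((Polynomial.derivative g).eval ξ₁) ^ 2 *
          (∑ m ∈ Finset.Icc (k + 1) p, α m * ξ₂ ^ m) ^ 2 +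
        (g.eval ξ₁) ^ 2 *
          (deriv (fun t : ℝ => ∑ m ∈ Finset.Icc (k + 1) p, α m * t ^ m) ξ₂) ^ 2)
      =Θ[𝓝[>] (0:ℝ)]
    (fun δ : ℝ => δ ^ (-2 : ℤ) *
        ∫ ξ₁ in c₁..c₂, ∫ ξ₂ in (0:ℝ)..δ,
          (g.eval ξ₁) ^ 2 * (∑ m ∈ Finset.Icc (k + 1) p, α m * ξ₂ ^ m) ^ 2) := by
  have hB : (∫ x in c₁..c₂, g.eval x ^ 2) ≠ 0 := (g.integral_eval_sq_pos hg hc).ne'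
  have hL2 : (fun δ => ∫ t in (0:ℝ)..δ, (∑ m ∈ Icc (k + 1) p, α m * t ^ m) ^ 2) =Θ[𝓝 0]
      fun δ => δ ^ (2 * (k + 1) + 1) := by
    simpa using isTheta_integral_sq_sum_Icc_mul_pow_sub α (i := 0) (Nat.zero_le _) hkp hα
  have hH1 : (fun δ => ∫ t in (0:ℝ)..δ, (∑ m ∈ Icc (k + 1) p, α m * m * t ^ (m - 1)) ^ 2)
      =Θ[𝓝 0] fun δ => δ ^ (2 * k + 1) := by
    simpa using isTheta_integral_sq_sum_Icc_mul_pow_sub (fun m => α m * m) (i := 1)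
      (Nat.le_add_left 1 k) hkp (mul_ne_zero hα (by positivity))
  have hf : Continuous fun t : ℝ => (∑ m ∈ Icc (k + 1) p, α m * t ^ m) ^ 2 := by fun_prop
  have hf' : Continuous fun t : ℝ => (∑ m ∈ Icc (k + 1) p, α m * m * t ^ (m - 1)) ^ 2 := by
    fun_prop
  have hg₁ : Continuous fun x => g.derivative.eval x ^ 2 := by fun_prop
  have hg₂ : Continuous fun x => g.eval x ^ 2 := by fun_prop
  simp_rw [deriv_sum_mul_pow, integral_integral_mul_add_mul hg₁ hg₂ hf hf', integral_integral_mul]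
  have hlhs := ((hL2.isBigO.const_mul_left (∫ x in c₁..c₂, g.derivative.eval x ^ 2)).trans_isLittleO
    (isLittleO_pow_pow (by omega))).add_isTheta (hH1.const_mul_left hB)
  have hrhs := (isTheta_refl (fun δ : ℝ => δ ^ (-2 : ℤ)) (𝓝[>] 0)).mul
    ((hL2.const_mul_left hB).mono nhdsWithin_le_nhds)
  refine (hlhs.mono nhdsWithin_le_nhds).trans (hrhs.trans_eventuallyEq ?_).symm
  filter_upwards [self_mem_nhdsWithin] with δ hδ
  rw [show 2 * (k + 1) + 1 = 2 * k + 1 + 2 by ring]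
  exact zpow_neg_two_mul_pow_add_two hδ.ne' _
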